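/- The difference between consecutive positive zeros of the Bessel function J_ν tends to π: if λ_{ν,j} denotes the j-th positive zero of J_ν, then lim_{j→∞} (λ_{ν,j+1} − λ_{ν,j}) = π. -/

import Mathlib

/-!
For `x > 0` write `J_ν x = (x / 2) ^ ν * G (x ^ 2 / 4)` with `G` an entire power series. Then
`u x = x ^ (ν + 1/2) * G (x ^ 2 / 4)` has the same positive zeros as `J_ν` and solves the Liouville
normal form `u'' + q u = 0` of Bessel's equation, with `q x = 1 + (1/4 - ν ^ 2) / x ^ 2 → 1`.
So for every `k > 1`, eventually `k⁻² < q < k²`, and Sturm comparison with `sin (x / k)` and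
with `sin (k x + c)` puts the distance between consecutive zeros of `u` far out between `π / k`
and `π k`.
-/

open Real MeasureTheory Filter

/-- Bessel function of the first kind of order `ν`, via its standard power series. -/
noncomputable def besselJ (ν x : ℝ) : ℝ :=
  ∑' m : ℕ, ((-1 : ℝ) ^ m / (Nat.factorial m * Real.Gamma ((m : ℝ) + ν + 1))) *
    (x / 2) ^ (2 * (m : ℝ) + ν)

open Set Topology

lemma IsPreconnected.forall_pos_or_forall_neg {X : Type*} [TopologicalSpace X] {s : Set X}
    (hs : IsPreconnected s) {f : X → ℝ} (hf : ContinuousOn f s) (hne : ∀ x ∈ s, f x ≠ 0) :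
    (∀ x ∈ s, 0 < f x) ∨ ∀ x ∈ s, f x < 0 := by
  by_contra! h
  obtain ⟨⟨x, hx, hfx⟩, y, hy, hfy⟩ := h
  obtain ⟨z, hz, hfz⟩ := hs.intermediate_value hx hy hf ⟨hfx, hfy⟩
  exact hne z hz hfz

lemma HasDerivAt.nonneg_of_eq_zero_of_pos_Ioo {f : ℝ → ℝ} {f' a b : ℝ} (hf : HasDerivAt f f' a)
    (hab : a < b) (hfa : f a = 0) (hpos : ∀ x ∈ Ioo a b, 0 < f x) : 0 ≤ f' := by
  have hslope := (hasDerivWithinAt_iff_tendsto_slope' (s := Ioi a) (lt_irrefl a)).1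
    hf.hasDerivWithinAt
  refine ge_of_tendsto hslope ?_
  filter_upwards [Ioo_mem_nhdsGT hab] with x hx
  rw [slope_def_field, hfa, sub_zero]
  exact div_nonneg (hpos x hx).le (sub_nonneg.2 hx.1.le)

lemma HasDerivAt.nonpos_of_eq_zero_of_pos_Ioo {f : ℝ → ℝ} {f' a b : ℝ} (hf : HasDerivAt f f' b)
    (hab : a < b) (hfb : f b = 0) (hpos : ∀ x ∈ Ioo a b, 0 < f x) : f' ≤ 0 := by
  have hslope := (hasDerivWithinAt_iff_tendsto_slope' (s := Iio b) (lt_irrefl b)).1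
    hf.hasDerivWithinAt
  refine le_of_tendsto hslope ?_
  filter_upwards [Ioo_mem_nhdsLT hab] with x hx
  rw [slope_def_field, hfb, sub_zero]
  exact div_nonpos_of_nonneg_of_nonpos (hpos x hx).le (sub_nonpos.2 hx.2.le)

def SolvesOscillatorOn (q u u' : ℝ → ℝ) (s : Set ℝ) : Prop :=
  ∀ x ∈ s, HasDerivAt u (u' x) x ∧ HasDerivAt u' (-q x * u x) x

lemma solvesOscillatorOn_sin (ω c : ℝ) (s : Set ℝ) :
    SolvesOscillatorOn (fun _ => ω ^ 2) (fun x => sin (ω * x + c)) (fun x => ω * cos (ω * x + c))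
      s := fun x _ => by
  have hlin : HasDerivAt (fun x => ω * x + c) ω x := by
    simpa using ((hasDerivAt_id x).const_mul ω).add_const c
  refine ⟨hlin.sin.congr_deriv (mul_comm _ _), ?_⟩
  exact (hlin.cos.const_mul ω).congr_deriv (by ring)

namespace SolvesOscillatorOn

variable {q p u u' v v' : ℝ → ℝ} {s t : Set ℝ} {a b ω : ℝ}

lemma mono (h : SolvesOscillatorOn q u u' s) (hts : t ⊆ s) : SolvesOscillatorOn q u u' t :=
  fun x hx => h x (hts hx)

lemma neg (h : SolvesOscillatorOn q u u' s) :
    SolvesOscillatorOn q (fun x => -u x) (fun x => -u' x) s := fun x hx =>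
  ⟨(h x hx).1.fun_neg, by simpa only [mul_neg] using (h x hx).2.fun_neg⟩

lemma continuousOn (h : SolvesOscillatorOn q u u' s) : ContinuousOn u s :=
  fun x hx => (h x hx).1.continuousAt.continuousWithinAt

/-- The Wronskian `W = u v' - u' v` is strictly decreasing on `[a, b]`, while the boundary
conditions force `W a ≤ 0 ≤ W b`. -/
lemma false_of_forall_pos (hu : SolvesOscillatorOn q u u' (Icc a b))
    (hv : SolvesOscillatorOn p v v' (Icc a b)) (hab : a < b) (hua : u a = 0) (hub : u b = 0)
    (hu_pos : ∀ x ∈ Ioo a b, 0 < u x) (hv_pos : ∀ x ∈ Ioo a b, 0 < v x)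
    (hqp : ∀ x ∈ Ioo a b, q x < p x) : False := by
  set W : ℝ → ℝ := fun x => u x * v' x - u' x * v x
  have hW : ∀ x ∈ Icc a b, HasDerivAt W ((q x - p x) * (u x * v x)) x := fun x hx =>
    (((hu x hx).1.fun_mul (hv x hx).2).fun_sub ((hu x hx).2.fun_mul (hv x hx).1)).congr_deriv
      (by ring)
  have hW_anti : StrictAntiOn W (Icc a b) := by
    refine strictAntiOn_of_hasDerivWithinAt_neg (f' := fun x => (q x - p x) * (u x * v x))
      (convex_Icc a b)
      (fun x hx => (hW x hx).continuousAt.continuousWithinAt) (fun x hx => ?_) (fun x hx => ?_)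
    all_goals rw [interior_Icc] at hx
    · exact (hW x (Ioo_subset_Icc_self hx)).hasDerivWithinAt
    · exact mul_neg_of_neg_of_pos (sub_neg.2 (hqp x hx)) (mul_pos (hu_pos x hx) (hv_pos x hx))
  have hv_nonneg : ∀ x ∈ Icc a b, 0 ≤ v x := by
    rw [← closure_Ioo hab.ne]
    exact le_on_closure (fun x hx => (hv_pos x hx).le) continuousOn_const
      (closure_Ioo hab.ne ▸ hv.continuousOn)
  have ha : a ∈ Icc a b := left_mem_Icc.2 hab.le
  have hb : b ∈ Icc a b := right_mem_Icc.2 hab.le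
  have hWa : W a ≤ 0 := by
    simp only [W, hua, zero_mul, zero_sub, neg_nonpos]
    exact mul_nonneg ((hu a ha).1.nonneg_of_eq_zero_of_pos_Ioo hab hua hu_pos) (hv_nonneg a ha)
  have hWb : 0 ≤ W b := by
    simp only [W, hub, zero_mul, zero_sub, neg_nonneg]
    exact mul_nonpos_of_nonpos_of_nonneg
      ((hu b hb).1.nonpos_of_eq_zero_of_pos_Ioo hab hub hu_pos) (hv_nonneg b hb)
  linarith [hW_anti ha hb hab]

theorem exists_zero_of_lt (hu : SolvesOscillatorOn q u u' (Icc a b))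
    (hv : SolvesOscillatorOn p v v' (Icc a b)) (hab : a < b) (hua : u a = 0) (hub : u b = 0)
    (hu_ne : ∀ x ∈ Ioo a b, u x ≠ 0) (hqp : ∀ x ∈ Ioo a b, q x < p x) :
    ∃ x ∈ Ioo a b, v x = 0 := by
  by_contra! hv_ne
  have hsign {f : ℝ → ℝ} (hf : ContinuousOn f (Icc a b)) (hne : ∀ x ∈ Ioo a b, f x ≠ 0) :=
    isPreconnected_Ioo.forall_pos_or_forall_neg (hf.mono Ioo_subset_Icc_self) hne
  rcases hsign hu.continuousOn hu_ne with hu_pos | hu_neg <;>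
    rcases hsign hv.continuousOn hv_ne with hv_pos | hv_neg
  · exact hu.false_of_forall_pos hv hab hua hub hu_pos hv_pos hqp
  · exact hu.false_of_forall_pos hv.neg hab hua hub hu_pos
      (fun x hx => neg_pos.2 (hv_neg x hx)) hqp
  · exact hu.neg.false_of_forall_pos hv hab (by simp [hua]) (by simp [hub])
      (fun x hx => neg_pos.2 (hu_neg x hx)) hv_pos hqp
  · exact hu.neg.false_of_forall_pos hv.neg hab (by simp [hua]) (by simp [hub])
      (fun x hx => neg_pos.2 (hu_neg x hx)) (fun x hx => neg_pos.2 (hv_neg x hx)) hqp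

theorem exists_zero_Ioo_add_pi_div (hu : SolvesOscillatorOn q u u' (Icc a (a + π / ω)))
    (hω : 0 < ω) (hq : ∀ x ∈ Ioo a (a + π / ω), ω ^ 2 < q x) :
    ∃ x ∈ Ioo a (a + π / ω), u x = 0 := by
  have hpi : ω * (π / ω) = π := mul_div_cancel₀ π hω.ne'
  refine (solvesOscillatorOn_sin ω (-(ω * a)) _).exists_zero_of_lt hu
    (lt_add_of_pos_right a (by positivity)) (by simp) ?_ (fun x hx => ?_) hq
  · rw [show ω * (a + π / ω) + -(ω * a) = π by linear_combination hpi, sin_pi]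
  · refine (sin_pos_of_pos_of_lt_pi ?_ ?_).ne'
    · nlinarith [hx.1]
    · nlinarith [hx.2]

theorem pi_div_le_sub (hu : SolvesOscillatorOn q u u' (Icc a b)) (hω : 0 < ω) (hab : a < b)
    (hua : u a = 0) (hub : u b = 0) (hu_ne : ∀ x ∈ Ioo a b, u x ≠ 0)
    (hq : ∀ x ∈ Ioo a b, q x < ω ^ 2) : π / ω ≤ b - a := by
  by_contra! hlt
  have hgap : ω * (b - a) < π := by rwa [lt_div_iff₀' hω] at hlt
  -- `sin (ω x + c)` is centred on `[a, b]`, so it stays positive there.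
  obtain ⟨x, hx, hzero⟩ := hu.exists_zero_of_lt (solvesOscillatorOn_sin ω ((π - ω * (a + b)) / 2) _)
    hab hua hub hu_ne hq
  refine (sin_pos_of_pos_of_lt_pi ?_ ?_).ne' hzero
  · nlinarith [hx.1]
  · nlinarith [hx.2]

end SolvesOscillatorOn

def derivCoeff (c : ℕ → ℝ) (n : ℕ) : ℝ := (n + 1) * c (n + 1)

def HasInfiniteRadius (c : ℕ → ℝ) : Prop := ∀ r : ℝ, 0 ≤ r → Summable fun n => |c n| * r ^ n

namespace HasInfiniteRadius

variable {c : ℕ → ℝ}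

lemma summable_natCast_mul_abs_mul_pow (hc : HasInfiniteRadius c) {r : ℝ} (hr : 0 ≤ r) :
    Summable fun n => n * |c n| * r ^ n := by
  refine (hc (2 * r) (by positivity)).of_nonneg_of_le (fun n => by positivity) fun n => ?_
  have hn : (n : ℝ) ≤ 2 ^ n := by exact_mod_cast (Nat.lt_two_pow_self).le
  calc n * |c n| * r ^ n ≤ 2 ^ n * |c n| * r ^ n := by gcongr
    _ = |c n| * (2 * r) ^ n := by ring

lemma summable_mul_pow (hc : HasInfiniteRadius c) (x : ℝ) : Summable fun n => c n * x ^ n :=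
  .of_abs <| by simpa only [abs_mul, abs_pow] using hc |x| (abs_nonneg x)

lemma summable_natCast_mul_mul_pow (hc : HasInfiniteRadius c) (x : ℝ) :
    Summable fun n => n * c n * x ^ n :=
  .of_abs <| by simpa only [abs_mul, abs_pow, Nat.abs_cast] using
    hc.summable_natCast_mul_abs_mul_pow (abs_nonneg x)

lemma mul_tsum_derivCoeff_mul_pow (hc : HasInfiniteRadius c) (x : ℝ) :
    x * ∑' n, derivCoeff c n * x ^ n = ∑' n, n * c n * x ^ n := by
  rw [(hc.summable_natCast_mul_mul_pow x).tsum_eq_zero_add, ← tsum_mul_left]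
  simp only [derivCoeff, CharP.cast_eq_zero, zero_mul, zero_add, pow_succ, Nat.cast_succ]
  exact tsum_congr fun n => by ring

theorem hasDerivAt_tsum_mul_pow (hc : HasInfiniteRadius c) (x : ℝ) :
    HasDerivAt (fun y => ∑' n, c n * y ^ n) (∑' n, derivCoeff c n * x ^ n) x := by
  set R := |x| + 1
  have hR : 1 ≤ R := le_add_of_nonneg_left (abs_nonneg x)
  have hx : x ∈ Metric.ball (0 : ℝ) R := by simp [R]
  have hbound : ∀ (n : ℕ), ∀ y ∈ Metric.ball (0 : ℝ) R,
      ‖c n * (n * y ^ (n - 1))‖ ≤ n * |c n| * R ^ n := fun n y hy => by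
    rw [mem_ball_zero_iff] at hy
    rw [Real.norm_eq_abs, abs_mul, abs_mul, abs_pow, Nat.abs_cast, ← mul_assoc, mul_comm |c n|]
    gcongr
    calc |y| ^ (n - 1) ≤ R ^ (n - 1) := by gcongr; exact hy.le
      _ ≤ R ^ n := pow_le_pow_right₀ hR (n.sub_le 1)
  have hsum := hc.summable_natCast_mul_abs_mul_pow (zero_le_one.trans hR)
  have hderiv := hasDerivAt_tsum_of_isPreconnected hsum Metric.isOpen_ball
    (convex_ball (0 : ℝ) R).isPreconnected
    (fun n y _ => (hasDerivAt_pow n y).const_mul (c n)) hbound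
    (Metric.mem_ball_self (zero_lt_one.trans_le hR)) (hc.summable_mul_pow 0) hx
  rw [(hsum.of_norm_bounded fun n => hbound n x hx).tsum_eq_zero_add] at hderiv
  simpa [derivCoeff, mul_left_comm, mul_comm] using hderiv

lemma derivCoeff (hc : HasInfiniteRadius c) : HasInfiniteRadius (derivCoeff c) := fun r hr => by
  have hshift := (summable_nat_add_iff 1).2 (hc.summable_natCast_mul_abs_mul_pow (by positivity :
    0 ≤ r + 1))
  refine hshift.of_nonneg_of_le (fun n => by positivity) fun n => ?_
  rw [_root_.derivCoeff, abs_mul, abs_of_nonneg (by positivity : (0 : ℝ) ≤ n + 1)]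
  push_cast
  gcongr
  calc r ^ n ≤ (r + 1) ^ n := by gcongr; linarith
    _ ≤ (r + 1) ^ (n + 1) := pow_le_pow_right₀ (by linarith) n.le_succ

end HasInfiniteRadius

lemma tendsto_one_add_div_sq_atTop (c : ℝ) : Tendsto (fun x : ℝ => 1 + c / x ^ 2) atTop (𝓝 1) := by
  simpa using tendsto_const_nhds.add
    (tendsto_const_nhds.div_atTop (tendsto_pow_atTop (α := ℝ) two_ne_zero))

lemma tendsto_of_forall_eventually_mem_Icc {α : Type*} {l : Filter α} {g : α → ℝ} {c : ℝ}
    (hc : 0 < c) (h : ∀ k > 1, ∀ᶠ a in l, g a ∈ Icc (c / k) (c * k)) : Tendsto g l (𝓝 c) := by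
  refine Metric.tendsto_nhds.2 fun ε hε => ?_
  set k := 1 + ε / (2 * c)
  have hk : 1 < k := lt_add_of_pos_right 1 (by positivity)
  have hck : c * k = c + ε / 2 := by simp only [k]; field_simp
  -- `1 / k ≥ 2 - k` since `(k - 1)^2 ≥ 0`
  have hck' : c - ε / 2 ≤ c / k := by
    rw [le_div_iff₀ (by linarith)]
    nlinarith [sq_nonneg (k - 1)]
  filter_upwards [h k hk] with a ha
  rw [Real.dist_eq, abs_lt]
  constructor <;> linarith [ha.1, ha.2]

lemma StrictMono.eventually_sub_mem_Icc {f : ℝ → ℝ} {lam : ℕ → ℝ} (hmono : StrictMono lam)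
    (hzero : ∀ j, f (lam j) = 0) (hall : ∀ x, 0 < x → f x = 0 → ∃ j, lam j = x) {X ℓ L : ℝ}
    (hX : 0 < X) (hexists : ∀ a, X ≤ a → ∃ z ∈ Ioo a (a + L), f z = 0)
    (hsep : ∀ a b, X ≤ a → a < b → f a = 0 → f b = 0 → (∀ x ∈ Ioo a b, f x ≠ 0) → ℓ ≤ b - a) :
    ∀ᶠ j in atTop, lam (j + 1) - lam j ∈ Icc ℓ L := by
  obtain ⟨z, hz, hfz⟩ := hexists X le_rfl
  obtain ⟨N, rfl⟩ := hall z (hX.trans hz.1) hfz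
  filter_upwards [eventually_ge_atTop N] with j hj
  have hXj : X ≤ lam j := hz.1.le.trans (hmono.monotone hj)
  constructor
  · refine hsep _ _ hXj (hmono j.lt_succ_self) (hzero j) (hzero _) fun x hx hfx => ?_
    obtain ⟨i, rfl⟩ := hall x (hX.trans_le (hXj.trans hx.1.le)) hfx
    have := hmono.lt_iff_lt.1 hx.1
    have := hmono.lt_iff_lt.1 hx.2
    omega
  · obtain ⟨z, hz, hfz⟩ := hexists _ hXj
    obtain ⟨i, rfl⟩ := hall z (hX.trans_le (hXj.trans hz.1.le)) hfz
    have hji : j + 1 ≤ i := hmono.lt_iff_lt.1 hz.1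
    linarith [hmono.monotone hji, hz.2]

section Bessel

variable {ν : ℝ}

theorem solvesOscillatorOn_rpow_mul_comp {w w' w'' : ℝ → ℝ} (hw : ∀ t, HasDerivAt w (w' t) t)
    (hw' : ∀ t, HasDerivAt w' (w'' t) t) (hode : ∀ t, t * w'' t + (ν + 1) * w' t + w t = 0) :
    SolvesOscillatorOn (fun x => 1 + (1 / 4 - ν ^ 2) / x ^ 2)
      (fun x => x ^ (ν + 1 / 2) * w (x ^ 2 / 4))
      (fun x => x ^ (ν + 1 / 2) * ((ν + 1 / 2) * x⁻¹ * w (x ^ 2 / 4) + x / 2 * w' (x ^ 2 / 4)))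
      (Ioi 0) := fun x (hx : 0 < x) => by
  have hP : HasDerivAt (fun x => x ^ (ν + 1 / 2)) ((ν + 1 / 2) * x ^ (ν + 1 / 2) * x⁻¹) x :=
    (hasDerivAt_rpow_const (Or.inl hx.ne')).congr_deriv (by rw [rpow_sub_one hx.ne']; ring)
  have hsq : HasDerivAt (fun x : ℝ => x ^ 2 / 4) (x / 2) x :=
    ((hasDerivAt_pow 2 x).div_const 4).congr_deriv (by ring)
  have hW : HasDerivAt (fun x => w (x ^ 2 / 4)) (w' (x ^ 2 / 4) * (x / 2)) x :=
    (hw _).comp x hsq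
  have hW' : HasDerivAt (fun x => w' (x ^ 2 / 4)) (w'' (x ^ 2 / 4) * (x / 2)) x :=
    (hw' _).comp x hsq
  have hinv := (hasDerivAt_inv hx.ne').const_mul (ν + 1 / 2)
  have hhalf : HasDerivAt (fun x : ℝ => x / 2) (1 / 2) x := (hasDerivAt_id x).div_const 2
  constructor
  · exact (hP.fun_mul hW).congr_deriv (by ring)
  · refine (hP.fun_mul ((hinv.fun_mul hW).fun_add (hhalf.fun_mul hW'))).congr_deriv ?_
    have := hode (x ^ 2 / 4)
    field_simp
    linear_combination 16 * x ^ 2 * this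

noncomputable def besselCoeff (ν : ℝ) (m : ℕ) : ℝ := (-1) ^ m / (m.factorial * Gamma (m + ν + 1))

noncomputable def besselSeries (ν t : ℝ) : ℝ := ∑' m, besselCoeff ν m * t ^ m

lemma besselCoeff_ne_zero (hν : -1 < ν) (m : ℕ) : besselCoeff ν m ≠ 0 := by
  have : 0 < Gamma (m + ν + 1) := Gamma_pos_of_pos (by linarith [m.cast_nonneg (α := ℝ)])
  unfold besselCoeff
  positivity

lemma add_add_one_mul_derivCoeff_besselCoeff (hν : -1 < ν) (m : ℕ) :
    (m + ν + 1) * derivCoeff (besselCoeff ν) m = -besselCoeff ν m := by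
  have hpos : 0 < (m : ℝ) + ν + 1 := by linarith [m.cast_nonneg (α := ℝ)]
  have hΓ : 0 < Gamma (m + ν + 1) := Gamma_pos_of_pos hpos
  rw [derivCoeff, besselCoeff, besselCoeff, Nat.cast_succ,
    show (m : ℝ) + 1 + ν + 1 = m + ν + 1 + 1 by ring, Gamma_add_one hpos.ne', Nat.factorial_succ]
  push_cast
  field_simp
  ring

lemma hasInfiniteRadius_besselCoeff (hν : -1 < ν) : HasInfiniteRadius (besselCoeff ν) := by
  suffices h : ∀ r > 0, Summable fun m => |besselCoeff ν m| * r ^ m from fun r hr =>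
    (h (r + 1) (by linarith)).of_nonneg_of_le (fun m => by positivity) fun m => by
      gcongr; linarith
  intro r hr
  have hratio (m : ℕ) : ‖|besselCoeff ν (m + 1)| * r ^ (m + 1)‖ / ‖|besselCoeff ν m| * r ^ m‖
      = r / ((m + ν + 1) * (m + 1)) := by
    have hrec := add_add_one_mul_derivCoeff_besselCoeff hν m
    have hpos : 0 < (m : ℝ) + ν + 1 := by linarith [m.cast_nonneg (α := ℝ)]
    have hM : 0 < ((m : ℝ) + ν + 1) * (m + 1) := mul_pos hpos (by positivity)
    have hc := abs_pos.2 (besselCoeff_ne_zero hν (m + 1))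
    rw [derivCoeff, ← mul_assoc] at hrec
    rw [Real.norm_of_nonneg (by positivity), Real.norm_of_nonneg (by positivity),
      ← abs_neg (besselCoeff ν m), ← hrec, abs_mul, abs_of_pos hM]
    field_simp
    ring
  refine summable_of_ratio_test_tendsto_lt_one zero_lt_one
    (.of_forall fun m => (mul_pos (abs_pos.2 (besselCoeff_ne_zero hν m)) (pow_pos hr m)).ne') ?_
  simp_rw [hratio]
  exact tendsto_const_nhds.div_atTop ((tendsto_atTop_add_const_right _ _
    (tendsto_natCast_atTop_atTop.atTop_add tendsto_const_nhds)).atTop_mul_atTop₀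
    (tendsto_atTop_add_const_right _ _ tendsto_natCast_atTop_atTop))

theorem besselSeries_ode (hν : -1 < ν) (t : ℝ) :
    t * ∑' m, derivCoeff (derivCoeff (besselCoeff ν)) m * t ^ m
      + (ν + 1) * ∑' m, derivCoeff (besselCoeff ν) m * t ^ m + besselSeries ν t = 0 := by
  have hc := hasInfiniteRadius_besselCoeff hν
  rw [hc.derivCoeff.mul_tsum_derivCoeff_mul_pow, besselSeries]
  refine (((hc.derivCoeff.summable_natCast_mul_mul_pow t).hasSum.add
    ((hc.derivCoeff.summable_mul_pow t).hasSum.mul_left (ν + 1))).add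
      (hc.summable_mul_pow t).hasSum).unique ?_
  convert hasSum_zero with n
  linear_combination t ^ n * add_add_one_mul_derivCoeff_besselCoeff hν n

lemma besselJ_eq_rpow_mul_besselSeries {x : ℝ} (hx : 0 < x) :
    besselJ ν x = (x / 2) ^ ν * besselSeries ν (x ^ 2 / 4) := by
  rw [besselJ, besselSeries, ← tsum_mul_left]
  refine tsum_congr fun m => ?_
  rw [rpow_add (half_pos hx), rpow_mul (half_pos hx).le, rpow_two, rpow_natCast,
    div_pow, show (2 : ℝ) ^ 2 = 4 by norm_num, besselCoeff]
  ring

lemma rpow_mul_besselSeries_eq_zero_iff {x : ℝ} (hx : 0 < x) :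
    x ^ (ν + 1 / 2) * besselSeries ν (x ^ 2 / 4) = 0 ↔ besselJ ν x = 0 := by
  rw [besselJ_eq_rpow_mul_besselSeries hx, mul_eq_zero, mul_eq_zero,
    or_iff_right (rpow_pos_of_pos hx _).ne', or_iff_right (rpow_pos_of_pos (half_pos hx) _).ne']

theorem solvesOscillatorOn_besselSeries (hν : -1 < ν) : ∃ u', SolvesOscillatorOn
    (fun x => 1 + (1 / 4 - ν ^ 2) / x ^ 2) (fun x => x ^ (ν + 1 / 2) * besselSeries ν (x ^ 2 / 4))
      u' (Ioi 0) := by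
  have hc := hasInfiniteRadius_besselCoeff hν
  exact ⟨_, solvesOscillatorOn_rpow_mul_comp hc.hasDerivAt_tsum_mul_pow
    hc.derivCoeff.hasDerivAt_tsum_mul_pow (besselSeries_ode hν)⟩

theorem besselJ_zero_gaps (hν : -1 < ν) {k : ℝ} (hk : 1 < k) :
    ∃ X > 0, (∀ a, X ≤ a → ∃ z ∈ Ioo a (a + π * k), besselJ ν z = 0) ∧
      ∀ a b, X ≤ a → a < b → besselJ ν a = 0 → besselJ ν b = 0 →
        (∀ x ∈ Ioo a b, besselJ ν x ≠ 0) → π / k ≤ b - a := by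
  obtain ⟨u', hu⟩ := solvesOscillatorOn_besselSeries hν
  have hk0 : 0 < k := by linarith
  have hq : ∀ᶠ x in atTop, 1 + (1 / 4 - ν ^ 2) / x ^ 2 ∈ Ioo (k⁻¹ ^ 2) (k ^ 2) :=
    (tendsto_one_add_div_sq_atTop _).eventually (Ioo_mem_nhds
      (pow_lt_one₀ (by positivity) (inv_lt_one_of_one_lt₀ hk) two_ne_zero)
      (one_lt_pow₀ hk two_ne_zero))
  obtain ⟨X, hX⟩ := eventually_atTop.1 (hq.and (eventually_gt_atTop 0))
  have hzero_iff {x : ℝ} (hx : X ≤ x) := rpow_mul_besselSeries_eq_zero_iff (ν := ν) (hX x hx).2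
  refine ⟨X, (hX X le_rfl).2, fun a ha => ?_, fun a b ha hab hza hzb hne => ?_⟩
  · obtain ⟨z, hz, hz0⟩ := (hu.mono fun x hx => (hX x (ha.trans hx.1)).2).exists_zero_Ioo_add_pi_div
      (inv_pos.2 hk0) fun x hx => (hX x (ha.trans hx.1.le)).1.1
    rw [div_inv_eq_mul] at hz
    exact ⟨z, hz, (hzero_iff (ha.trans hz.1.le)).1 hz0⟩
  · exact (hu.mono fun x hx => (hX x (ha.trans hx.1)).2).pi_div_le_sub hk0 hab
      ((hzero_iff ha).2 hza) ((hzero_iff (ha.trans hab.le)).2 hzb)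
      (fun x hx h0 => hne x hx ((hzero_iff (ha.trans hx.1.le)).1 h0))
      fun x hx => (hX x (ha.trans hx.1.le)).1.2

end Bessel

theorem bessel_zero_gap_tendsto_pi_general (ν : ℝ) (hν : 0 ≤ ν)
    (lam : ℕ → ℝ) (hmono : StrictMono lam)
    (hzero : ∀ j, besselJ ν (lam j) = 0)
    (hall : ∀ x, 0 < x → besselJ ν x = 0 → ∃ j, lam j = x) :
    Tendsto (fun j => lam (j + 1) - lam j) atTop (nhds Real.pi) := by
  refine tendsto_of_forall_eventually_mem_Icc pi_pos fun k hk => ?_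
  obtain ⟨X, hX, hexists, hsep⟩ := besselJ_zero_gaps (by linarith : -1 < ν) hk
  exact hmono.eventually_sub_mem_Icc hzero hall hX hexists hsep

/-- The difference between consecutive positive zeros of `J_ν` tends to `π`. -/
theorem bessel_zero_gap_tendsto_pi (ν : ℝ) (hν : 0 ≤ ν)
    (lam : ℕ → ℝ) (hmono : StrictMono lam) (hpos : ∀ j, 0 < lam j)
    (hzero : ∀ j, besselJ ν (lam j) = 0)
    (hall : ∀ x, 0 < x → besselJ ν x = 0 → ∃ j, lam j = x) :
    Tendsto (fun j => lam (j + 1) - lam j) atTop (nhds Real.pi) :=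
  bessel_zero_gap_tendsto_pi_general ν hν lam hmono hzero hall
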